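/- arXiv:1308.1073 — 2 statements merged into one kernel-verified Lean document; each statement's English description precedes it below -/
import Mathlib

section
/- Let H be a separable complex Hilbert space, let α, β : G → H be bounded continuous functions, and let f, g ∈ L²(G). Then there exist sequences (F_n) and (G_n) in L²(G) such that Σ_n ‖F_n‖₂·‖G_n‖₂ ≤ (sup_{s∈G} ‖α(s)‖)·(sup_{t∈G} ‖β(t)‖)·‖f‖₂·‖g‖₂, and for almost every pair (s,t) ∈ G × G one has Σ_n F_n(s)·G_n(t) = f(s)·g(t)·⟪α(s), β(t)⟫, where ⟪·,·⟫ is the inner product of H. -/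
open MeasureTheory Filter Topology
open scoped ENNReal NNReal

/-!
Expand the kernel in a Hilbert basis `b` of `H`, which is countable because `H` is separable.
Parseval's identity `⟪α s, β t⟫ = ∑ᵢ ⟪α s, b i⟫ ⟪b i, β t⟫` suggests `Fᵢ s = f s ⟪α s, b i⟫` and
`Gᵢ t = g t ⟪b i, β t⟫`. Integrating Bessel's inequality gives `∑ᵢ ‖Fᵢ‖₂² ≤ (sup ‖α‖ ‖f‖₂)²` and
likewise for `Gᵢ`, so Cauchy–Schwarz bounds `∑ᵢ ‖Fᵢ‖₂ ‖Gᵢ‖₂` by the required product.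
-/

section Orthonormal

variable {𝕜 E ι : Type*} [RCLike 𝕜] [NormedAddCommGroup E] [InnerProductSpace 𝕜 E] {v : ι → E}

theorem Orthonormal.norm_sub_sq_eq_two (hv : Orthonormal 𝕜 v) {i j : ι} (hij : i ≠ j) :
    ‖v i - v j‖ ^ 2 = 2 := by
  rw [@norm_sub_sq 𝕜, hv.norm_eq_one, hv.norm_eq_one, hv.inner_eq_zero hij]
  norm_num

theorem Orthonormal.countable [TopologicalSpace.SeparableSpace E] (hv : Orthonormal 𝕜 v) :
    Countable ι := by
  refine Pairwise.countable_of_isOpen_disjoint (s := fun i => Metric.ball (v i) (1 / 2))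
    (fun i j hij => Metric.ball_disjoint_ball ?_) (fun _ => Metric.isOpen_ball)
    (fun _ => Metric.nonempty_ball.2 (by norm_num))
  have h := hv.norm_sub_sq_eq_two hij
  rw [dist_eq_norm]
  nlinarith [norm_nonneg (v i - v j)]

theorem Orthonormal.sum_norm_inner_left_sq_le (hv : Orthonormal 𝕜 v) (x : E) (u : Finset ι) :
    ∑ i ∈ u, ‖inner 𝕜 x (v i)‖ ^ 2 ≤ ‖x‖ ^ 2 := by
  simpa only [norm_inner_symm] using hv.sum_inner_products_le x

end Orthonormal

theorem Function.extend_zero_apply₂ {ι κ α β γ : Type*} [Zero α] [Zero β] [Zero γ] {e : ι → κ}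
    (he : e.Injective) (φ : α → β → γ) (hφ : φ 0 0 = 0) (f : ι → α) (g : ι → β) (n : κ) :
    φ (Function.extend e f 0 n) (Function.extend e g 0 n) =
      Function.extend e (fun i => φ (f i) (g i)) 0 n := by
  by_cases hn : ∃ i, e i = n
  · obtain ⟨i, rfl⟩ := hn
    simp only [he.extend_apply]
  · simp only [Function.extend_apply' _ _ _ hn, Pi.zero_apply, hφ]

theorem summable_mul_of_sum_sq_le {ι : Type*} {a b : ι → ℝ} (ha : 0 ≤ a) (hb : 0 ≤ b)
    {A B : ℝ} (hA0 : 0 ≤ A) (hB0 : 0 ≤ B) (hA : ∀ u : Finset ι, ∑ i ∈ u, a i ^ 2 ≤ A ^ 2)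
    (hB : ∀ u : Finset ι, ∑ i ∈ u, b i ^ 2 ≤ B ^ 2) :
    Summable (fun i => a i * b i) ∧ ∑' i, a i * b i ≤ A * B := by
  have h : ∀ u : Finset ι, ∑ i ∈ u, a i * b i ≤ A * B := fun u => by
    refine abs_le_of_sq_le_sq' ?_ (by positivity) |>.2
    calc (∑ i ∈ u, a i * b i) ^ 2 ≤ (∑ i ∈ u, a i ^ 2) * ∑ i ∈ u, b i ^ 2 :=
          Finset.sum_mul_sq_le_sq_mul_sq u a b
      _ ≤ A ^ 2 * B ^ 2 := by
          gcongr
          exacts [hA u, hB u]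
      _ = (A * B) ^ 2 := by ring
  have hs : Summable (fun i => a i * b i) :=
    summable_of_sum_le (fun i => mul_nonneg (ha i) (hb i)) h
  exact ⟨hs, hs.tsum_le_of_sum_le h⟩

namespace MeasureTheory

theorem exists_nat_family_of_countable {X Y R ι : Type*} [MeasurableSpace X] [MeasurableSpace Y]
    [NormedRing R] {μ : Measure X} {ν : Measure Y} {p q : ℝ≥0∞} [Countable ι]
    (F : ι → Lp R p μ) (G : ι → Lp R q ν) {S : ℝ} {k : X × Y → R}
    (hS : HasSum (fun i => ‖F i‖ * ‖G i‖) S)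
    (hk : ∀ᵐ z ∂μ.prod ν, HasSum (fun i => F i z.1 * G i z.2) (k z)) :
    ∃ (F' : ℕ → Lp R p μ) (G' : ℕ → Lp R q ν), HasSum (fun n => ‖F' n‖ * ‖G' n‖) S ∧
      ∀ᵐ z ∂μ.prod ν, HasSum (fun n => F' n z.1 * G' n z.2) (k z) := by
  obtain ⟨e, he⟩ := Countable.exists_injective_nat ι
  refine ⟨Function.extend e F 0, Function.extend e G 0, ?_, ?_⟩
  · convert (hasSum_extend_zero he).2 hS using 1
    funext n
    exact Function.extend_zero_apply₂ he (fun x y => ‖x‖ * ‖y‖) (by simp) F G n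
  · filter_upwards [hk, Measure.quasiMeasurePreserving_fst.ae (Lp.coeFn_zero R p μ),
      Measure.quasiMeasurePreserving_snd.ae (Lp.coeFn_zero R q ν)] with z hz h0 h0'
    convert (hasSum_extend_zero he).2 hz using 1
    funext n
    exact Function.extend_zero_apply₂ he (fun (x : Lp R p μ) (y : Lp R q ν) => x z.1 * y z.2)
      (by rw [h0, Pi.zero_apply, zero_mul]) F G n

section L2

variable {X 𝕜 : Type*} [MeasurableSpace X] {μ : Measure X} [RCLike 𝕜]

theorem Lp.norm_sq_eq_integral_norm_sq (F : Lp 𝕜 2 μ) : ‖F‖ ^ 2 = ∫ x, ‖F x‖ ^ 2 ∂μ := by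
  rw [@norm_sq_eq_re_inner 𝕜, L2.inner_def, ← integral_re (L2.integrable_inner F F)]
  simp only [inner_self_eq_norm_sq]

theorem MemLp.norm_toLp_sq_eq_integral {g : X → 𝕜} (hg : MemLp g 2 μ) :
    ‖hg.toLp g‖ ^ 2 = ∫ x, ‖g x‖ ^ 2 ∂μ := by
  rw [Lp.norm_sq_eq_integral_norm_sq]
  exact integral_congr_ae (hg.coeFn_toLp.mono fun x hx => by simp only [hx])

theorem exists_Lp_mul_of_sum_sq_le {ι : Type*} (f : Lp 𝕜 2 μ) {c : ι → X → 𝕜}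
    (hc : ∀ i, AEStronglyMeasurable (c i) μ) {C : ℝ}
    (hC : ∀ x (u : Finset ι), ∑ i ∈ u, ‖c i x‖ ^ 2 ≤ C ^ 2) :
    ∃ F : ι → Lp 𝕜 2 μ, (∀ i, ∀ᵐ x ∂μ, F i x = f x * c i x) ∧
      ∀ u : Finset ι, ∑ i ∈ u, ‖F i‖ ^ 2 ≤ (C * ‖f‖) ^ 2 := by
  have hc_le : ∀ i x, ‖c i x‖ ≤ |C| := fun i x => by
    have h := hC x {i}
    rw [Finset.sum_singleton] at h
    exact (abs_norm (c i x)).symm.le.trans (sq_le_sq.1 h)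
  have hmem : ∀ i, MemLp (fun x => f x * c i x) 2 μ := fun i =>
    (Lp.memLp f).of_le_mul ((Lp.aestronglyMeasurable f).mul (hc i)) <|
      Eventually.of_forall fun x => by
        rw [norm_mul, mul_comm]; gcongr; exact hc_le i x
  have hint : ∀ i, Integrable (fun x => ‖f x * c i x‖ ^ 2) μ := fun i =>
    (memLp_two_iff_integrable_sq_norm (hmem i).aestronglyMeasurable).1 (hmem i)
  refine ⟨fun i => (hmem i).toLp _, fun i => (hmem i).coeFn_toLp, fun u => ?_⟩
  calc ∑ i ∈ u, ‖(hmem i).toLp _‖ ^ 2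
      = ∫ x, ∑ i ∈ u, ‖f x * c i x‖ ^ 2 ∂μ := by
        simp only [MemLp.norm_toLp_sq_eq_integral]
        exact (integral_finsetSum u fun i _ => hint i).symm
    _ ≤ ∫ x, C ^ 2 * ‖f x‖ ^ 2 ∂μ := by
        refine integral_mono (integrable_finsetSum u fun i _ => hint i)
          ((Lp.memLp f).integrable_norm_pow two_ne_zero |>.const_mul _) fun x => ?_
        simp only [norm_mul, mul_pow, ← Finset.mul_sum, mul_comm (C ^ 2)]
        gcongr
        exact hC x u
    _ = (C * ‖f‖) ^ 2 := by
        rw [integral_const_mul, ← Lp.norm_sq_eq_integral_norm_sq, mul_pow]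

end L2

end MeasureTheory

theorem kernel_multiplication_L2_general
    {G : Type*} [TopologicalSpace G] [MeasurableSpace G] [BorelSpace G]
    (μ : Measure G)
    {H : Type*} [NormedAddCommGroup H] [InnerProductSpace ℂ H] [CompleteSpace H]
    [TopologicalSpace.SeparableSpace H]
    (α β : G → H) (hαc : Continuous α) (hβc : Continuous β)
    (hαb : ∃ M : ℝ, ∀ s, ‖α s‖ ≤ M) (hβb : ∃ M : ℝ, ∀ t, ‖β t‖ ≤ M)
    (f g : Lp ℂ 2 μ) :
    ∃ (F : ℕ → Lp ℂ 2 μ) (Gs : ℕ → Lp ℂ 2 μ),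
      Summable (fun n => ‖F n‖ * ‖Gs n‖) ∧
      (∑' n, ‖F n‖ * ‖Gs n‖) ≤ (⨆ s, ‖α s‖) * (⨆ t, ‖β t‖) * ‖f‖ * ‖g‖ ∧
      (∀ᵐ st ∂(μ.prod μ),
        HasSum (fun n => F n st.1 * Gs n st.2)
          (f st.1 * g st.2 * (@inner ℂ H _ (α st.1) (β st.2)))) := by
  obtain ⟨Mα, hMα⟩ := hαb
  obtain ⟨Mβ, hMβ⟩ := hβb
  have hα_le (s : G) : ‖α s‖ ≤ ⨆ s', ‖α s'‖ := le_ciSup ⟨Mα, Set.forall_mem_range.2 hMα⟩ s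
  have hβ_le (t : G) : ‖β t‖ ≤ ⨆ t', ‖β t'‖ := le_ciSup ⟨Mβ, Set.forall_mem_range.2 hMβ⟩ t
  have hα_nonneg : 0 ≤ ⨆ s, ‖α s‖ := Real.iSup_nonneg fun s => norm_nonneg _
  have hβ_nonneg : 0 ≤ ⨆ t, ‖β t‖ := Real.iSup_nonneg fun t => norm_nonneg _
  obtain ⟨w, b, -⟩ := exists_hilbertBasis ℂ H
  have : Countable w := b.orthonormal.countable
  obtain ⟨F, hF, hF_sq⟩ := exists_Lp_mul_of_sum_sq_le f (c := fun i s => inner ℂ (α s) (b i))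
    (fun i => (hαc.inner continuous_const).aestronglyMeasurable)
    (fun s u => (b.orthonormal.sum_norm_inner_left_sq_le (α s) u).trans (by gcongr; exact hα_le s))
  obtain ⟨Gs, hG, hG_sq⟩ := exists_Lp_mul_of_sum_sq_le g (c := fun i t => inner ℂ (b i) (β t))
    (fun i => (continuous_const.inner hβc).aestronglyMeasurable)
    (fun t u => (b.orthonormal.sum_inner_products_le (β t)).trans (by gcongr; exact hβ_le t))
  obtain ⟨hsum, hle⟩ := summable_mul_of_sum_sq_le (fun i => norm_nonneg (F i))
    (fun i => norm_nonneg (Gs i)) (by positivity) (by positivity) hF_sq hG_sq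
  obtain ⟨F', G', hS, hk⟩ := exists_nat_family_of_countable F Gs hsum.hasSum (k := fun z =>
      f z.1 * g z.2 * inner ℂ (α z.1) (β z.2)) <| by
    filter_upwards [Measure.quasiMeasurePreserving_fst.ae (ae_all_iff.2 hF),
      Measure.quasiMeasurePreserving_snd.ae (ae_all_iff.2 hG)] with z hFz hGz
    simp only [hFz, hGz, mul_mul_mul_comm]
    exact (b.hasSum_inner_mul_inner _ _).mul_left _
  exact ⟨F', G', hS.summable, hS.tsum_eq ▸ hle.trans_eq (by ring), hk⟩

/-- Let `G` be a locally compact group with left Haar measure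
`μ`, `H` a separable complex Hilbert space, `α β : G → H` bounded continuous
functions, and `f, g ∈ L²(G)`.  Then there are sequences `(F_n)`, `(Gs_n)` in
`L²(G)` with `Σ_n ‖F_n‖₂·‖Gs_n‖₂ ≤ (sup_s ‖α(s)‖)·(sup_t ‖β(t)‖)·‖f‖₂·‖g‖₂` and,
for almost every `(s,t) ∈ G × G`, `Σ_n F_n(s)·Gs_n(t) = f(s)·g(t)·⟪α(s), β(t)⟫`. -/
theorem kernel_multiplication_L2
    {G : Type*} [Group G] [TopologicalSpace G] [IsTopologicalGroup G]
    [LocallyCompactSpace G] [MeasurableSpace G] [BorelSpace G]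
    (μ : Measure G) [μ.IsHaarMeasure]
    {H : Type*} [NormedAddCommGroup H] [InnerProductSpace ℂ H] [CompleteSpace H]
    [TopologicalSpace.SeparableSpace H]
    (α β : G → H) (hαc : Continuous α) (hβc : Continuous β)
    (hαb : ∃ M : ℝ, ∀ s, ‖α s‖ ≤ M) (hβb : ∃ M : ℝ, ∀ t, ‖β t‖ ≤ M)
    (f g : Lp ℂ 2 μ) :
    ∃ (F : ℕ → Lp ℂ 2 μ) (Gs : ℕ → Lp ℂ 2 μ),
      Summable (fun n => ‖F n‖ * ‖Gs n‖) ∧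
      (∑' n, ‖F n‖ * ‖Gs n‖) ≤ (⨆ s, ‖α s‖) * (⨆ t, ‖β t‖) * ‖f‖ * ‖g‖ ∧
      (∀ᵐ st ∂(μ.prod μ),
        HasSum (fun n => F n st.1 * Gs n st.2)
          (f st.1 * g st.2 * (@inner ℂ H _ (α st.1) (β st.2)))) :=
  kernel_multiplication_L2_general μ α β hαc hβc hαb hβb f g
end

section
/- Let H be a complex Hilbert space, let α, β : G → H be bounded continuous functions, let φ : G → ℂ be a continuous function satisfying φ(ts⁻¹) = ⟪α(s), β(t)⟫ for all s, t ∈ G, and let f : G → ℝ be a continuous, compactly supported, nonnegative function with ∫_G f = 1. Define β' : G → H by the Bochner integral β'(t) = ∫_G f(x) β(x⁻¹t) dx. Then β' is bounded and continuous with sup_{t} ‖β'(t)‖ ≤ sup_{t} ‖β(t)‖, and the convolution f ⋆ φ, defined by (f ⋆ φ)(r) = ∫_G f(x) φ(x⁻¹r) dx, satisfies (f ⋆ φ)(ts⁻¹) = ⟪α(s), β'(t)⟫ for all s, t ∈ G. -/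
open MeasureTheory

/-! `β'` is an average of left translates of `β` against the probability density `f`, so it
inherits the sup bound of `β`, and it is continuous because `f` has compact support. Since
`φ (x⁻¹ * t * s⁻¹) = ⟪α s, β (x⁻¹ * t)⟫`, the coefficient form of `f ⋆ φ` is obtained by pulling
the inner product with `α s` out of the Bochner integral defining `β' t`. -/

open scoped InnerProductSpace

section WeightedIntegral

variable {X E : Type*} [MeasurableSpace X] {μ : Measure X}
  [NormedAddCommGroup E] [NormedSpace ℝ E]

lemma norm_integral_smul_le_of_integral_eq_one {f : X → ℝ} {g : X → E} {C : ℝ}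
    (hf : Integrable f μ) (hf0 : ∀ x, 0 ≤ f x) (hf1 : ∫ x, f x ∂μ = 1)
    (hg : ∀ x, ‖g x‖ ≤ C) :
    ‖∫ x, f x • g x ∂μ‖ ≤ C := by
  calc ‖∫ x, f x • g x ∂μ‖ ≤ ∫ x, f x * C ∂μ := by
        refine norm_integral_le_of_norm_le (hf.mul_const C) (.of_forall fun x => ?_)
        rw [norm_smul, Real.norm_of_nonneg (hf0 x)]
        exact mul_le_mul_of_nonneg_left (hg x) (hf0 x)
    _ = C := by rw [integral_mul_const, hf1, one_mul]

lemma integral_ofReal_mul_inner {H : Type*} [NormedAddCommGroup H] [InnerProductSpace ℂ H]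
    [CompleteSpace H] {f : X → ℝ} {g : X → H} (hfg : Integrable (fun x => f x • g x) μ) (a : H) :
    ∫ x, (f x : ℂ) * ⟪a, g x⟫_ℂ ∂μ = ⟪a, ∫ x, f x • g x ∂μ⟫_ℂ := by
  rw [← integral_inner hfg]
  simp_rw [← Complex.coe_smul, inner_smul_right]

end WeightedIntegral

lemma continuous_integral_smul_comp_inv_mul {G E : Type*} [Group G] [TopologicalSpace G]
    [IsTopologicalGroup G] [MeasurableSpace G] [OpensMeasurableSpace G] {μ : Measure G}
    [IsFiniteMeasureOnCompacts μ] [NormedAddCommGroup E] [NormedSpace ℝ E]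
    {f : G → ℝ} {g : G → E} (hf : Continuous f) (hfs : HasCompactSupport f) (hg : Continuous g) :
    Continuous fun t => ∫ x, f x • g (x⁻¹ * t) ∂μ := by
  rw [← continuousOn_univ]
  refine continuousOn_integral_of_compact_support hfs ?_ fun t x _ hx => ?_
  · exact ((hf.comp continuous_snd).smul
      (hg.comp (continuous_snd.inv.mul continuous_fst))).continuousOn
  · simp [image_eq_zero_of_notMem_tsupport hx]

theorem convolved_multiplier_coefficient_form_general
    {G : Type*} [Group G] [TopologicalSpace G] [IsTopologicalGroup G]
    [MeasurableSpace G] [BorelSpace G]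
    (μ : Measure G) [μ.IsHaarMeasure]
    {H : Type*} [NormedAddCommGroup H] [InnerProductSpace ℂ H] [CompleteSpace H]
    (α β : G → H) (hβc : Continuous β)
    (hβb : ∃ M : ℝ, ∀ t, ‖β t‖ ≤ M)
    (φ : G → ℂ)
    (hrep : ∀ s t : G, φ (t * s⁻¹) = @inner ℂ H _ (α s) (β t))
    (f : G → ℝ) (hfc : Continuous f) (hfs : HasCompactSupport f)
    (hf0 : ∀ x, 0 ≤ f x) (hf1 : (∫ x, f x ∂μ) = 1)
    (β' : G → H) (hβ' : ∀ t, β' t = ∫ x, f x • β (x⁻¹ * t) ∂μ) :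
    Continuous β' ∧
    (∀ t, ‖β' t‖ ≤ ⨆ u, ‖β u‖) ∧
    (∀ s t : G, (∫ x, (f x : ℂ) * φ (x⁻¹ * (t * s⁻¹)) ∂μ) = @inner ℂ H _ (α s) (β' t)) := by
  obtain ⟨M, hM⟩ := hβb
  have hβ_bdd : BddAbove (Set.range fun u => ‖β u‖) := ⟨M, Set.forall_mem_range.2 hM⟩
  have hint (t : G) : Integrable (fun x => f x • β (x⁻¹ * t)) μ :=
    (hfc.smul (hβc.comp (continuous_inv.mul continuous_const))).integrable_of_hasCompactSupport
      hfs.smul_right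
  refine ⟨?_, fun t => ?_, fun s t => ?_⟩
  · rw [funext hβ']
    exact continuous_integral_smul_comp_inv_mul hfc hfs hβc
  · rw [hβ' t]
    exact norm_integral_smul_le_of_integral_eq_one (hfc.integrable_of_hasCompactSupport hfs) hf0
      hf1 fun x => le_ciSup hβ_bdd _
  · simp_rw [hβ' t, ← integral_ofReal_mul_inner (hint t), ← mul_assoc, hrep]

/-- Let `G` be a locally compact group with left Haar measure
`μ` and `H` a complex Hilbert space.  Let `α, β : G → H` be bounded continuous,
let `φ : G → ℂ` be continuous with `φ(ts⁻¹) = ⟪α(s), β(t)⟫` for all `s, t`, and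
let `f : G → ℝ` be continuous, compactly supported, nonnegative, with `∫ f = 1`.
Define `β'(t) = ∫ f(x)·β(x⁻¹t) dx` (a Bochner integral).  Then `β'` is continuous
and bounded with `sup_t ‖β'(t)‖ ≤ sup_t ‖β(t)‖` (we assert the pointwise bound
`‖β'(t)‖ ≤ sup_u ‖β(u)‖`), and `(f ⋆ φ)(ts⁻¹) = ⟪α(s), β'(t)⟫` for all `s, t`,
where `(f ⋆ φ)(r) = ∫ f(x)·φ(x⁻¹r) dx`. -/
theorem convolved_multiplier_coefficient_form
    {G : Type*} [Group G] [TopologicalSpace G] [IsTopologicalGroup G]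
    [LocallyCompactSpace G] [MeasurableSpace G] [BorelSpace G]
    (μ : Measure G) [μ.IsHaarMeasure]
    {H : Type*} [NormedAddCommGroup H] [InnerProductSpace ℂ H] [CompleteSpace H]
    (α β : G → H) (hαc : Continuous α) (hβc : Continuous β)
    (hαb : ∃ M : ℝ, ∀ s, ‖α s‖ ≤ M) (hβb : ∃ M : ℝ, ∀ t, ‖β t‖ ≤ M)
    (φ : G → ℂ) (hφc : Continuous φ)
    (hrep : ∀ s t : G, φ (t * s⁻¹) = @inner ℂ H _ (α s) (β t))
    (f : G → ℝ) (hfc : Continuous f) (hfs : HasCompactSupport f)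
    (hf0 : ∀ x, 0 ≤ f x) (hf1 : (∫ x, f x ∂μ) = 1)
    (β' : G → H) (hβ' : ∀ t, β' t = ∫ x, f x • β (x⁻¹ * t) ∂μ) :
    Continuous β' ∧
    (∀ t, ‖β' t‖ ≤ ⨆ u, ‖β u‖) ∧
    (∀ s t : G, (∫ x, (f x : ℂ) * φ (x⁻¹ * (t * s⁻¹)) ∂μ) = @inner ℂ H _ (α s) (β' t)) :=
  convolved_multiplier_coefficient_form_general μ α β hβc hβb φ hrep f hfc hfs hf0 hf1 β' hβ'
end
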